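/- For every real number z > 0 that is not an integer, with n = ⌊z⌋, one has Γ(−z) = −(1/z) · ∫₀^∞ (e^{−x} − e_{n−1}(−x)) · x^{−z} dx, where Γ(−z) denotes the value at −z of the Gamma function analytically continued to negative non-integer arguments. -/

import Mathlib

open MeasureTheory Real Filter Set

/-- Truncated exponential polynomial `e_n(x) = ∑_{k=0}^{n} x^k / k!`.
Note that `e_{n-1}(x)` corresponds to `∑ k in Finset.range n, x^k / k!`. -/
noncomputable def truncExpPrev (n : ℕ) (x : ℝ) : ℝ :=
  ∑ k ∈ Finset.range n, x ^ k / (k.factorial : ℝ)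

/-!
Write `R_n(x) = eˣ - e_{n-1}(x)`. Since `R_{n+1}' = R_n`, integrating `R_{n+1}(-x)` against
`x^{s-1} = (x^s / s)'` by parts gives
`∫₀^∞ R_{n+1}(-x) x^{s-1} dx = (1/s) ∫₀^∞ R_n(-x) x^s dx` for `-1 < s + n < 0`: the boundary
terms vanish because `|R_{n+1}(-x)| ≤ e x^{n+1}` on `(0, 1]` and `R_{n+1}(-x) x^s` is, up to
`e^{-x} x^s`, a combination of powers `x^{k+s}` with `k + s < 0`. Starting from Euler's integral
and using `Γ(s) = Γ(s+1)/s`, induction on `n` gives `Γ(s) = ∫₀^∞ R_n(-x) x^{s-1} dx` whenever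
`0 < s + n < 1`. Take `s = 1 - z`, `n = ⌊z⌋` and use `Γ(1 - z) = -z Γ(-z)`.
-/

open Topology

noncomputable def expRemainder (n : ℕ) (x : ℝ) : ℝ := exp x - truncExpPrev n x

lemma continuous_truncExpPrev (n : ℕ) : Continuous (truncExpPrev n) := by
  unfold truncExpPrev; fun_prop

lemma continuous_expRemainder (n : ℕ) : Continuous (expRemainder n) :=
  continuous_exp.sub (continuous_truncExpPrev n)

lemma hasDerivAt_truncExpPrev_succ (n : ℕ) (x : ℝ) :
    HasDerivAt (truncExpPrev (n + 1)) (truncExpPrev n x) x := by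
  unfold truncExpPrev
  refine (HasDerivAt.fun_sum fun k _ =>
    (hasDerivAt_pow k x).div_const (k.factorial : ℝ)).congr_deriv ?_
  rw [Finset.sum_range_succ']
  simp only [CharP.cast_eq_zero, zero_mul, zero_div, add_zero, Nat.cast_add, Nat.cast_one,
    add_tsub_cancel_right, Nat.factorial_succ, Nat.cast_mul]
  refine Finset.sum_congr rfl fun k _ => ?_
  field_simp

lemma hasDerivAt_expRemainder_succ (n : ℕ) (x : ℝ) :
    HasDerivAt (expRemainder (n + 1)) (expRemainder n x) x :=
  (hasDerivAt_exp x).sub (hasDerivAt_truncExpPrev_succ n x)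

lemma abs_expRemainder_le (n : ℕ) (x : ℝ) : |expRemainder n x| ≤ |x| ^ n * exp |x| := by
  have h := Complex.norm_exp_sub_sum_le_norm_mul_exp x n
  simp only [expRemainder, truncExpPrev]
  exact_mod_cast h

lemma truncExpPrev_neg_mul_rpow {x : ℝ} (hx : 0 < x) (n : ℕ) (t : ℝ) :
    truncExpPrev n (-x) * x ^ t = ∑ k ∈ Finset.range n, (-1) ^ k / k.factorial * x ^ (k + t) := by
  rw [truncExpPrev, Finset.sum_mul]
  refine Finset.sum_congr rfl fun k _ => ?_
  rw [rpow_add hx, rpow_natCast, neg_pow]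
  ring

section
variable {n : ℕ} {t : ℝ}

lemma norm_expRemainder_neg_mul_rpow_le {x : ℝ} (hx0 : 0 < x) (hx1 : x ≤ 1) :
    ‖expRemainder n (-x) * x ^ t‖ ≤ exp 1 * x ^ (t + n) :=
  calc ‖expRemainder n (-x) * x ^ t‖ = |expRemainder n (-x)| * x ^ t := by
        rw [norm_mul, norm_of_nonneg (rpow_nonneg hx0.le _), Real.norm_eq_abs]
    _ ≤ x ^ n * exp 1 * x ^ t := by
        gcongr
        refine (abs_expRemainder_le n (-x)).trans ?_
        rw [abs_neg, abs_of_pos hx0]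
        gcongr
    _ = exp 1 * x ^ (t + n) := by rw [rpow_add hx0, rpow_natCast]; ring

lemma integrableOn_Ioc_expRemainder_neg_mul_rpow (h : -1 < t + n) :
    IntegrableOn (fun x => expRemainder n (-x) * x ^ t) (Ioc 0 1) := by
  have hcont : ContinuousOn (fun x => expRemainder n (-x) * x ^ t) (Ioc 0 1) :=
    ((continuous_expRemainder n).comp continuous_neg).continuousOn.mul
      (continuousOn_id.rpow_const fun _ hx => Or.inl hx.1.ne')
  refine Integrable.mono' ((intervalIntegral.intervalIntegrable_rpow' h).1.const_mul (exp 1))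
    (hcont.aestronglyMeasurable measurableSet_Ioc) ?_
  filter_upwards [ae_restrict_mem measurableSet_Ioc] with x hx
  exact norm_expRemainder_neg_mul_rpow_le hx.1 hx.2

lemma integrableOn_Ioi_exp_neg_mul_rpow {a : ℝ} (ha : 0 < a) (t : ℝ) :
    IntegrableOn (fun x => exp (-x) * x ^ t) (Ioi a) :=
  integrable_of_isBigO_exp_neg one_half_pos
    ((continuous_exp.comp continuous_neg).continuousOn.mul
      (continuousOn_id.rpow_const fun _ hx => Or.inl (ha.trans_le hx).ne'))
    (Gamma_integrand_isLittleO t).isBigO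

lemma integrableOn_Ioi_one_expRemainder_neg_mul_rpow (h : t + n < 0) :
    IntegrableOn (fun x => expRemainder n (-x) * x ^ t) (Ioi 1) := by
  have hpoly : IntegrableOn
      (fun x : ℝ => ∑ k ∈ Finset.range n, (-1 : ℝ) ^ k / k.factorial * x ^ (k + t)) (Ioi 1) := by
    refine integrable_finsetSum _ fun k hk => Integrable.const_mul ?_ _
    have : (k : ℝ) + 1 ≤ n := by exact_mod_cast Finset.mem_range.1 hk
    exact integrableOn_Ioi_rpow_of_lt (by linarith) zero_lt_one
  refine ((integrableOn_Ioi_exp_neg_mul_rpow one_pos t).sub hpoly).congr_fun (fun x hx => ?_)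
    measurableSet_Ioi
  rw [Pi.sub_apply, expRemainder, sub_mul, truncExpPrev_neg_mul_rpow (zero_lt_one.trans hx)]

lemma integrableOn_Ioi_expRemainder_neg_mul_rpow (h₁ : -1 < t + n) (h₂ : t + n < 0) :
    IntegrableOn (fun x => expRemainder n (-x) * x ^ t) (Ioi 0) := by
  rw [← Ioc_union_Ioi_eq_Ioi zero_le_one]
  exact (integrableOn_Ioc_expRemainder_neg_mul_rpow h₁).union
    (integrableOn_Ioi_one_expRemainder_neg_mul_rpow h₂)

lemma tendsto_expRemainder_neg_mul_rpow_nhdsGT_zero (h : 0 < t + n) :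
    Tendsto (fun x => expRemainder n (-x) * x ^ t) (𝓝[>] 0) (𝓝 0) := by
  have hbound : Tendsto (fun x : ℝ => exp 1 * x ^ (t + n)) (𝓝[>] 0) (𝓝 0) := by
    simpa [zero_rpow h.ne'] using
      ((continuousAt_rpow_const 0 _ (Or.inr h.le)).tendsto.const_mul (exp 1)).mono_left
        nhdsWithin_le_nhds
  refine squeeze_zero_norm' ?_ hbound
  filter_upwards [Ioc_mem_nhdsGT zero_lt_one] with x hx
  exact norm_expRemainder_neg_mul_rpow_le hx.1 hx.2

lemma tendsto_expRemainder_neg_mul_rpow_atTop (h : t + n < 1) :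
    Tendsto (fun x => expRemainder n (-x) * x ^ t) atTop (𝓝 0) := by
  have hexp : Tendsto (fun x => exp (-x) * x ^ t) atTop (𝓝 0) := by
    simpa [mul_comm] using tendsto_rpow_mul_exp_neg_mul_atTop_nhds_zero t 1 one_pos
  have hpoly : Tendsto (fun x : ℝ => ∑ k ∈ Finset.range n, (-1 : ℝ) ^ k / k.factorial * x ^ (k + t))
      atTop (𝓝 0) := by
    rw [← Finset.sum_const_zero (s := Finset.range n)]
    refine tendsto_finsetSum _ fun k hk => ?_
    have : (k : ℝ) + 1 ≤ n := by exact_mod_cast Finset.mem_range.1 hk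
    simpa using (tendsto_rpow_neg_atTop (y := -(k + t)) (by linarith)).const_mul
      ((-1) ^ k / (k.factorial : ℝ))
  have hdiff := hexp.sub hpoly
  rw [sub_zero] at hdiff
  refine hdiff.congr' ?_
  filter_upwards [Ioi_mem_atTop 0] with x hx
  rw [expRemainder, sub_mul, truncExpPrev_neg_mul_rpow hx]

end

lemma integral_expRemainder_succ_neg_mul_rpow {n : ℕ} {s : ℝ} (h₁ : -1 < s + n)
    (h₂ : s + n < 0) :
    ∫ x in Ioi 0, expRemainder (n + 1) (-x) * x ^ (s - 1) =
      1 / s * ∫ x in Ioi 0, expRemainder n (-x) * x ^ s := by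
  have hs : s ≠ 0 := by linarith [n.cast_nonneg (α := ℝ)]
  have hu : ∀ x ∈ Ioi (0 : ℝ),
      HasDerivAt (fun y => expRemainder (n + 1) (-y)) (-expRemainder n (-x)) x := fun x _ =>
    ((hasDerivAt_expRemainder_succ n (-x)).comp x (hasDerivAt_neg x)).congr_deriv (mul_neg_one _)
  have hv : ∀ x ∈ Ioi (0 : ℝ), HasDerivAt (fun y => y ^ s / s) (x ^ (s - 1)) x := fun x hx => by
    simpa [hs] using (hasDerivAt_rpow_const (p := s) (Or.inl (ne_of_gt hx))).div_const s
  have huv' : IntegrableOn (fun x => expRemainder (n + 1) (-x) * x ^ (s - 1)) (Ioi 0) :=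
    integrableOn_Ioi_expRemainder_neg_mul_rpow (by push_cast; linarith) (by push_cast; linarith)
  have hu'v : IntegrableOn (fun x => -expRemainder n (-x) * (x ^ s / s)) (Ioi 0) :=
    IntegrableOn.congr_fun ((integrableOn_Ioi_expRemainder_neg_mul_rpow h₁ h₂).const_mul
      (-s⁻¹)) (fun _ _ => by ring) measurableSet_Ioi
  have hlim : ∀ l, Tendsto (fun x => expRemainder (n + 1) (-x) * x ^ s) l (𝓝 0) →
      Tendsto (fun x => expRemainder (n + 1) (-x) * (x ^ s / s)) l (𝓝 0) := fun l h => by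
    simpa [mul_div_assoc] using h.div_const s
  rw [integral_Ioi_mul_deriv_eq_deriv_mul hu hv huv' hu'v
    (hlim _ (tendsto_expRemainder_neg_mul_rpow_nhdsGT_zero (by push_cast; linarith)))
    (hlim _ (tendsto_expRemainder_neg_mul_rpow_atTop (by push_cast; linarith)))]
  simp only [neg_mul, integral_neg, ← mul_div_assoc, integral_div]
  ring

theorem Gamma_eq_integral_expRemainder_neg_mul_rpow (n : ℕ) {s : ℝ} (h₁ : 0 < s + n)
    (h₂ : s + n < 1) : Gamma s = ∫ x in Ioi 0, expRemainder n (-x) * x ^ (s - 1) := by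
  induction n generalizing s with
  | zero =>
    rw [Nat.cast_zero, add_zero] at h₁
    simp [Gamma_eq_integral h₁, expRemainder, truncExpPrev]
  | succ n ih =>
    push_cast at h₁ h₂
    have hs : s ≠ 0 := by linarith [n.cast_nonneg (α := ℝ)]
    have hGamma := ih (s := s + 1) (by linarith) (by linarith)
    rw [add_sub_cancel_right, Gamma_add_one hs] at hGamma
    rw [integral_expRemainder_succ_neg_mul_rpow (by linarith) (by linarith), ← hGamma]
    field_simp

/-- Gamma at negative non-integer arguments: for non-integer `z > 0` with `n = ⌊z⌋`,
`Γ(-z) = -(1/z) ∫₀^∞ (e^{-x} - e_{n-1}(-x)) x^{-z} dx`. -/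
theorem Gamma_neg_integral_rep (z : ℝ) (hz : 0 < z) (hnint : ∀ m : ℤ, z ≠ (m : ℝ)) :
    Real.Gamma (-z) = -(1 / z) *
      ∫ x in Set.Ioi (0 : ℝ), (Real.exp (-x) - truncExpPrev ⌊z⌋₊ (-x)) * x ^ (-z) := by
  have hfloor : (⌊z⌋₊ : ℝ) < z :=
    (Nat.floor_le hz.le).lt_of_ne fun h => hnint ⌊z⌋₊ (by exact_mod_cast h.symm)
  have hGamma := Gamma_eq_integral_expRemainder_neg_mul_rpow ⌊z⌋₊ (s := -z + 1)
    (by linarith [Nat.lt_floor_add_one z]) (by linarith)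
  rw [add_sub_cancel_right, Gamma_add_one (neg_ne_zero.2 hz.ne')] at hGamma
  change _ = _ * ∫ x in Ioi 0, expRemainder ⌊z⌋₊ (-x) * x ^ (-z)
  rw [← hGamma]
  field_simp
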